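/- Let R be the n×n matrix of pairwise effective resistances of a connected graph G, R_{ij} = res(i,j), and let P = I - (1/n)J be the projection onto the orthogonal complement of the all-ones vector. Then -(1/2) P R P = L^+, the pseudoinverse of the Laplacian of G. -/
import Mathlib


open Matrix

/-- `B` is the Moore–Penrose pseudoinverse of `A`. -/
def IsMoorePenrose {V : Type*} [Fintype V] [DecidableEq V] (A B : Matrix V V ℝ) : Prop :=
  A * B * A = A ∧ B * A * B = B ∧ (A * B)ᵀ = A * B ∧ (B * A)ᵀ = B * A

/-- Effective resistance between `u` and `v`, given a matrix `M` playing the role of the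
pseudoinverse of the Laplacian: `(1_u - 1_v)ᵀ M (1_u - 1_v)`. -/
noncomputable def effRes {V : Type*} [Fintype V] [DecidableEq V]
    (M : Matrix V V ℝ) (u v : V) : ℝ :=
  (Pi.single u 1 - Pi.single v 1) ⬝ᵥ (M *ᵥ (Pi.single u 1 - Pi.single v 1))

/-- A symmetric, nonnegative edge-weight function with zero diagonal,
encoding a weighted graph (weight `0` means no edge). -/
structure IsWeight {V : Type*} (w : V → V → ℝ) : Prop where
  symm : ∀ u v, w u v = w v u
  nonneg : ∀ u v, 0 ≤ w u v
  loopless : ∀ v, w v v = 0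

/-- The support graph of a weight function: `u ~ v` iff `u ≠ v` and `w u v ≠ 0`. -/
def supportGraph {V : Type*} (w : V → V → ℝ) : SimpleGraph V :=
  SimpleGraph.fromRel fun u v => w u v ≠ 0

/-- The weighted graph Laplacian `L = D - A`. -/
noncomputable def wLap {V : Type*} [Fintype V] [DecidableEq V] (w : V → V → ℝ) :
    Matrix V V ℝ :=
  Matrix.diagonal (fun v => ∑ u, w v u) - Matrix.of w

section Aux
variable {V : Type*} [Fintype V] [DecidableEq V]

lemma mp_unique {A B C : Matrix V V ℝ} (hB : IsMoorePenrose A B)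
    (hC : IsMoorePenrose A C) : B = C := by
  obtain ⟨hB1, hB2, hB3, hB4⟩ := hB
  obtain ⟨hC1, hC2, hC3, hC4⟩ := hC
  have hAB : A * B = A * C := by
    have hAt : Aᵀ = Aᵀ * (A * C) := by
      conv_lhs => rw [← hC1]
      rw [Matrix.transpose_mul, hC3]
    calc A * B = (A * B)ᵀ := hB3.symm
    _ = Bᵀ * Aᵀ := Matrix.transpose_mul _ _
    _ = Bᵀ * (Aᵀ * (A * C)) := by conv_lhs => rw [hAt]
    _ = Bᵀ * Aᵀ * (A * C) := by rw [Matrix.mul_assoc]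
    _ = (A * B)ᵀ * (A * C) := by rw [← Matrix.transpose_mul]
    _ = A * B * (A * C) := by rw [hB3]
    _ = A * B * A * C := by rw [Matrix.mul_assoc (A*B) A C]
    _ = A * C := by rw [hB1]
  have hBA : B * A = C * A := by
    have hAt : Aᵀ = C * A * Aᵀ := by
      conv_lhs => rw [← hC1]
      rw [Matrix.transpose_mul, Matrix.transpose_mul, ← Matrix.mul_assoc,
        ← Matrix.transpose_mul, hC4]
    calc B * A = (B * A)ᵀ := hB4.symm
    _ = Aᵀ * Bᵀ := Matrix.transpose_mul _ _
    _ = C * A * Aᵀ * Bᵀ := by conv_lhs => rw [hAt]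
    _ = C * A * (Aᵀ * Bᵀ) := by rw [Matrix.mul_assoc]
    _ = C * A * (B * A)ᵀ := by rw [← Matrix.transpose_mul]
    _ = C * A * (B * A) := by rw [hB4]
    _ = C * (A * B * A) := by noncomm_ring
    _ = C * A := by rw [hB1]
  calc B = B * A * B := hB2.symm
  _ = C * A * B := by rw [hBA]
  _ = C * (A * B) := Matrix.mul_assoc _ _ _
  _ = C * (A * C) := by rw [hAB]
  _ = C * A * C := (Matrix.mul_assoc _ _ _).symm
  _ = C := hC2

lemma mp_transpose {A B : Matrix V V ℝ} (h : IsMoorePenrose A B) :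
    IsMoorePenrose Aᵀ Bᵀ := by
  obtain ⟨h1, h2, h3, h4⟩ := h
  refine ⟨?_, ?_, ?_, ?_⟩
  · rw [← Matrix.transpose_mul, ← Matrix.transpose_mul, ← Matrix.mul_assoc, h1]
  · rw [← Matrix.transpose_mul, ← Matrix.transpose_mul, ← Matrix.mul_assoc, h2]
  · rw [← Matrix.transpose_mul, Matrix.transpose_transpose, h4]
  · rw [← Matrix.transpose_mul, Matrix.transpose_transpose, h3]

lemma wLap_symm (w : V → V → ℝ) (hw : IsWeight w) : (wLap w)ᵀ = wLap w := by
  unfold wLap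
  rw [Matrix.transpose_sub, Matrix.diagonal_transpose]
  congr 1
  ext i j
  exact hw.symm j i

lemma wLap_mul_J (w : V → V → ℝ) :
    wLap w * (Matrix.of fun _ _ : V => (1:ℝ)) = 0 := by
  ext i j
  simp [wLap, Matrix.mul_apply, Matrix.sub_apply, Finset.sum_sub_distrib,
    Matrix.diagonal_apply, Finset.sum_ite_eq]

lemma effRes_eq (M : Matrix V V ℝ) (u v : V) :
    effRes M u v = M u u + M v v - M u v - M v u := by
  simp [effRes, Matrix.mulVec_sub, Matrix.mulVec_single, dotProduct,
    Pi.single_apply, sub_mul, ite_mul, Finset.sum_sub_distrib,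
    Finset.sum_ite_eq, Finset.sum_ite_eq']
  ring

end Aux

/-- With `R` the matrix of pairwise effective resistances and `P = I - (1/n)J` the
projection onto the orthogonal complement of the all-ones vector,
`-(1/2) P R P = L⁺`. -/
theorem neg_half_PRP_eq_pinv {V : Type*} [Fintype V] [DecidableEq V]
    (w : V → V → ℝ) (hw : IsWeight w) (hconn : (supportGraph w).Connected)
    (Lp : Matrix V V ℝ) (hLp : IsMoorePenrose (wLap w) Lp) :
    (-(1 / 2 : ℝ)) •
      ((1 - ((Fintype.card V : ℝ))⁻¹ • (Matrix.of fun _ _ : V => (1 : ℝ))) *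
        (Matrix.of fun i j : V => effRes Lp i j) *
        (1 - ((Fintype.card V : ℝ))⁻¹ • (Matrix.of fun _ _ : V => (1 : ℝ)))) = Lp := by
  cases isEmpty_or_nonempty V with
  | inl h => exact Subsingleton.elim _ _
  | inr h =>
  set L := wLap w with hLdef
  set J : Matrix V V ℝ := Matrix.of fun _ _ => (1:ℝ) with hJdef
  set c : ℝ := ((Fintype.card V : ℝ))⁻¹ with hcdef
  set P : Matrix V V ℝ := 1 - c • J with hPdef
  have hn : (Fintype.card V : ℝ) ≠ 0 := by exact_mod_cast Fintype.card_ne_zero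
  have hLT : Lᵀ = L := by rw [hLdef]; exact wLap_symm w hw
  have hsymm : Lpᵀ = Lp := by
    have h' := mp_transpose hLp
    rw [hLT] at h'
    exact mp_unique h' hLp
  have hJT : Jᵀ = J := by ext i j; simp [hJdef]
  have hLJ : L * J = 0 := wLap_mul_J w
  have hJL : J * L = 0 := by
    have h0 : (L * J)ᵀ = 0 := by rw [hLJ]; simp
    rw [Matrix.transpose_mul, hJT, hLT] at h0
    exact h0
  have hLpJ : Lp * J = 0 := by
    obtain ⟨h1, h2, h3, h4⟩ := hLp
    calc Lp * J = (Lp * L * Lp) * J := by rw [h2]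
    _ = Lp * ((L * Lp) * J) := by noncomm_ring
    _ = Lp * ((L * Lp)ᵀ * J) := by rw [h3]
    _ = Lp * (Lpᵀ * (Lᵀ * J)) := by rw [Matrix.transpose_mul, Matrix.mul_assoc]
    _ = 0 := by rw [hLT, hLJ]; simp
  have hJLp : J * Lp = 0 := by
    have h0 : (Lp * J)ᵀ = 0 := by rw [hLpJ]; simp
    rwa [Matrix.transpose_mul, hJT, hsymm] at h0
  have hJJ : J * J = (Fintype.card V : ℝ) • J := by
    ext i j; simp [hJdef, Matrix.mul_apply, Matrix.smul_apply]
  have hPJ : P * J = 0 := by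
    rw [hPdef, Matrix.sub_mul, Matrix.one_mul, Matrix.smul_mul, hJJ, smul_smul,
      hcdef, inv_mul_cancel₀ hn, one_smul, sub_self]
  have hJP : J * P = 0 := by
    rw [hPdef, Matrix.mul_sub, Matrix.mul_one, Matrix.mul_smul, hJJ, smul_smul,
      hcdef, inv_mul_cancel₀ hn, one_smul, sub_self]
  have hPLp : P * Lp = Lp := by
    rw [hPdef, Matrix.sub_mul, Matrix.one_mul, Matrix.smul_mul, hJLp, smul_zero, sub_zero]
  have hLpP : Lp * P = Lp := by
    rw [hPdef, Matrix.mul_sub, Matrix.mul_one, Matrix.mul_smul, hLpJ, smul_zero, sub_zero]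
  set D : Matrix V V ℝ := Matrix.diagonal (fun i => Lp i i) with hDdef
  have hR : (Matrix.of fun i j : V => effRes Lp i j) = D * J + J * D - Lp - Lp := by
    ext i j
    have hji : Lp j i = Lp i j := by
      conv_rhs => rw [← hsymm]
      simp [Matrix.transpose_apply]
    simp [effRes_eq, hDdef, hJdef, Matrix.mul_apply, Matrix.diagonal_apply,
      Finset.sum_ite_eq, Finset.sum_ite_eq', Matrix.sub_apply, Matrix.add_apply, hji]
    try ring
  have t1 : P * (D * J) * P = 0 := by
    rw [Matrix.mul_assoc P (D * J) P, Matrix.mul_assoc D J P, hJP,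
      Matrix.mul_zero, Matrix.mul_zero]
  have t2 : P * (J * D) * P = 0 := by
    rw [← Matrix.mul_assoc P J D, hPJ, Matrix.zero_mul, Matrix.zero_mul]
  have t3 : P * Lp * P = Lp := by rw [hPLp, hLpP]
  have key : P * (Matrix.of fun i j : V => effRes Lp i j) * P = -Lp - Lp := by
    rw [hR]
    simp only [Matrix.mul_sub, Matrix.mul_add, Matrix.sub_mul, Matrix.add_mul]
    rw [t1, t2, t3]
    abel
  rw [key]
  ext i j
  simp [Matrix.smul_apply, Matrix.sub_apply, Matrix.neg_apply]
  ring
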